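/- Let (q, β, α) be a parameter triple of the transformation ODE model and let c₁, c₂ > 0. Define a second triple (q̃, β̃, α̃) by requiring β̃ = c₁·β, Ã(t) = c₂·(A(t))^{c₁} for all t ≥ 0, and Q̃(u) = c₂·(Q(u))^{c₁} for all u ≥ 0, where Ã(t) = ∫₀ᵗ α̃(s) ds and Q̃(u) = ∫₀ᵘ q̃(v)⁻¹ dv. Then for every covariate value x ∈ ℝ^d and every t ≥ 0, the solutions of the two initial value problems coincide: Λ̃_x(t) = Λ_x(t). -/
import Mathlib


open Real MeasureTheory Filter Set Topology

private lemma ftc_right {f : ℝ → ℝ} (hf : ContinuousOn f (Ici 0)) {b : ℝ} (hb : 0 ≤ b) :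
    HasDerivWithinAt (fun u => ∫ x in (0:ℝ)..u, f x) (f b) (Ici 0) b := by
  have hsub : uIcc (0:ℝ) b ⊆ Ici 0 := by
    rw [uIcc_of_le hb]; exact fun y hy => hy.1
  have hint : IntervalIntegrable f volume 0 b := (hf.mono hsub).intervalIntegrable
  rcases hb.eq_or_lt with h0 | h0
  · subst h0
    exact intervalIntegral.integral_hasDerivWithinAt_right hint
      ((hf.stronglyMeasurableAtFilter_nhdsWithin measurableSet_Ici 0).filter_mono
        (nhdsWithin_mono _ Ioi_subset_Ici_self))
      ((hf 0 Set.self_mem_Ici).mono Ioi_subset_Ici_self)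
  · have hmem : Ici (0:ℝ) ∈ 𝓝 b := Ici_mem_nhds h0
    exact (intervalIntegral.integral_hasDerivAt_right hint
      ⟨Ici 0, hmem, hf.aestronglyMeasurable measurableSet_Ici⟩
      (hf.continuousAt hmem)).hasDerivWithinAt

private lemma nonneg_of_ivp {f g : ℝ → ℝ} (hf0 : f 0 = 0)
    (hderiv : ∀ t, 0 ≤ t → HasDerivWithinAt f (g t) (Ici 0) t)
    (hgpos : ∀ t, 0 ≤ t → f t = 0 → 0 < g t) :
    ∀ t, 0 ≤ t → 0 ≤ f t := by
  intro t ht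
  by_contra hneg
  push_neg at hneg
  have hcont : ContinuousOn f (Ici 0) := fun u hu => (hderiv u hu).continuousWithinAt
  set K := Icc 0 t ∩ f ⁻¹' Ici 0 with hK
  have hKne : K.Nonempty := ⟨0, ⟨le_rfl, ht⟩, by simp [hf0]⟩
  have hKbdd : BddAbove K := BddAbove.mono inter_subset_left bddAbove_Icc
  have hKclosed : IsClosed K :=
    (hcont.mono Icc_subset_Ici_self).preimage_isClosed_of_isClosed isClosed_Icc isClosed_Ici
  set s := sSup K with hs
  obtain ⟨⟨hs0, hst⟩, hsf⟩ := hKclosed.csSup_mem hKne hKbdd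
  have hsf : (0:ℝ) ≤ f s := hsf
  have hslt : s < t := lt_of_le_of_ne hst (fun h => absurd (h ▸ hsf) (not_le.2 hneg))
  have hIoc : ∀ u ∈ Ioc s t, f u < 0 := by
    intro u hu
    by_contra h
    push_neg at h
    have : u ∈ K := ⟨⟨hs0.trans hu.1.le, hu.2⟩, h⟩
    exact absurd (le_csSup hKbdd this) (not_le.2 hu.1)
  have hne : (𝓝[Ioc s t] s).NeBot := by
    rw [← mem_closure_iff_nhdsWithin_neBot, closure_Ioc hslt.ne]
    exact ⟨le_rfl, hslt.le⟩
  have hfsle : f s ≤ 0 := by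
    have htend : Tendsto f (𝓝[Ioc s t] s) (𝓝 (f s)) :=
      (hcont s hs0).mono_left (nhdsWithin_mono _ (fun u hu => hs0.trans hu.1.le))
    exact le_of_tendsto htend (eventually_nhdsWithin_of_forall fun u hu => (hIoc u hu).le)
  have hfs : f s = 0 := le_antisymm hfsle hsf
  have hd : 0 < g s := hgpos s hs0 hfs
  have hslope := (hderiv s hs0)
  rw [hasDerivWithinAt_iff_tendsto_slope] at hslope
  have h2 : Tendsto (slope f s) (𝓝[Ioc s t] s) (𝓝 (g s)) :=
    hslope.mono_left (nhdsWithin_mono _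
      (fun u hu => ⟨hs0.trans hu.1.le, ne_of_gt hu.1⟩))
  have h3 : ∀ᶠ u in 𝓝[Ioc s t] s, 0 < slope f s u := h2.eventually (eventually_gt_nhds hd)
  obtain ⟨u, hupos, huIoc⟩ := (h3.and eventually_mem_nhdsWithin).exists
  have : slope f s u < 0 := by
    rw [slope_def_field, hfs, sub_zero]
    exact div_neg_of_neg_of_pos (hIoc u huIoc) (sub_pos.2 huIoc.1)
  linarith

private lemma ode_identity {q α : ℝ → ℝ} (hqc : ContinuousOn q (Ici 0))
    (hqpos : ∀ u, 0 ≤ u → 0 < q u) (hαc : ContinuousOn α (Ici 0))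
    (hαpos : ∀ t, 0 ≤ t → 0 < α t)
    {Q A : ℝ → ℝ} (hQ : ∀ u, Q u = ∫ v in (0:ℝ)..u, (q v)⁻¹)
    (hA : ∀ t, A t = ∫ s in (0:ℝ)..t, α s)
    {E : ℝ} (hE : 0 < E) {f : ℝ → ℝ} (hf0 : f 0 = 0)
    (hfd : ∀ t, 0 ≤ t → HasDerivWithinAt f (q (f t) * E * α t) (Ici 0) t) :
    ∀ t, 0 ≤ t → Q (f t) = E * A t := by
  have hQfun : Q = fun u => ∫ v in (0:ℝ)..u, (q v)⁻¹ := funext hQ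
  have hAfun : A = fun t => ∫ s in (0:ℝ)..t, α s := funext hA
  have hqinv : ContinuousOn (fun v => (q v)⁻¹) (Ici 0) :=
    hqc.inv₀ (fun v hv => (hqpos v hv).ne')
  have hQd : ∀ y, 0 ≤ y → HasDerivWithinAt Q (q y)⁻¹ (Ici 0) y := by
    intro y hy; rw [hQfun]; exact ftc_right hqinv hy
  have hAd : ∀ y, 0 ≤ y → HasDerivWithinAt A (α y) (Ici 0) y := by
    intro y hy; rw [hAfun]; exact ftc_right hαc hy
  have hfnn : ∀ t, 0 ≤ t → 0 ≤ f t := by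
    refine nonneg_of_ivp hf0 hfd (fun t ht h0 => ?_)
    rw [h0]
    exact mul_pos (mul_pos (hqpos 0 le_rfl) hE) (hαpos t ht)
  have hmaps : MapsTo f (Ici 0) (Ici 0) := fun y hy => hfnn y hy
  intro T hT
  refine eq_of_has_deriv_right_eq (f' := fun u => E * α u)
    (f := Q ∘ f) (g := fun u => E * A u) (a := 0) (b := T)
    ?_ ?_ ?_ ?_ ?_ T ⟨hT, le_rfl⟩
  · intro u hu
    have hcomp := HasDerivWithinAt.comp u (hQd (f u) (hfnn u hu.1)) (hfd u hu.1) hmaps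
    have hqne := (hqpos (f u) (hfnn u hu.1)).ne'
    have heq : (q (f u))⁻¹ * (q (f u) * E * α u) = E * α u := by
      field_simp
    rw [heq] at hcomp
    exact hcomp.mono (Ici_subset_Ici.2 hu.1)
  · intro u hu
    exact ((hAd u hu.1).const_mul E).mono (Ici_subset_Ici.2 hu.1)
  · have hQcont : ContinuousOn Q (Ici 0) := fun y hy => (hQd y hy).continuousWithinAt
    have hfcont : ContinuousOn f (Ici 0) := fun y hy => (hfd y hy).continuousWithinAt
    exact (hQcont.comp hfcont hmaps).mono Icc_subset_Ici_self
  · have hAcont : ContinuousOn A (Ici 0) := fun y hy => (hAd y hy).continuousWithinAt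
    exact ((continuousOn_const).mul hAcont).mono Icc_subset_Ici_self
  · simp [Function.comp, hf0, hQ 0, hA 0]

/-- If the second parameter triple `(q̃, β̃, α̃)` is obtained from `(q, β, α)` by
`β̃ = c₁ β`, `Ã = c₂ A^{c₁}` and `Q̃ = c₂ Q^{c₁}` for positive constants `c₁, c₂`,
then the two initial value problems have the same solution for every covariate `x`. -/
theorem stmt_1
    (d : ℕ) (hd : 1 ≤ d)
    (q qt α αt : ℝ → ℝ) (β βt : Fin d → ℝ)
    (hqc : ContinuousOn q (Ici 0)) (hqpos : ∀ u, 0 ≤ u → 0 < q u)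
    (hαc : ContinuousOn α (Ici 0)) (hαpos : ∀ t, 0 ≤ t → 0 < α t)
    (hqtc : ContinuousOn qt (Ici 0)) (hqtpos : ∀ u, 0 ≤ u → 0 < qt u)
    (hαtc : ContinuousOn αt (Ici 0)) (hαtpos : ∀ t, 0 ≤ t → 0 < αt t)
    (A At Q Qt : ℝ → ℝ)
    (hA : ∀ t, A t = ∫ s in (0:ℝ)..t, α s)
    (hAt : ∀ t, At t = ∫ s in (0:ℝ)..t, αt s)
    (hQ : ∀ u, Q u = ∫ v in (0:ℝ)..u, (q v)⁻¹)
    (hQt : ∀ u, Qt u = ∫ v in (0:ℝ)..u, (qt v)⁻¹)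
    (hQtop : Tendsto Q atTop atTop)
    (hQttop : Tendsto Qt atTop atTop)
    -- the second triple is defined through the positive constants c₁, c₂
    (c₁ c₂ : ℝ) (hc₁ : 0 < c₁) (hc₂ : 0 < c₂)
    (hβ : βt = c₁ • β)
    (hAc : ∀ t, 0 ≤ t → At t = c₂ * (A t) ^ c₁)
    (hQc : ∀ u, 0 ≤ u → Qt u = c₂ * (Q u) ^ c₁)
    -- Λ and Λ̃ are the solutions of the two initial value problems
    (Λ Λt : (Fin d → ℝ) → ℝ → ℝ)
    (hΛ0 : ∀ x, Λ x 0 = 0) (hΛt0 : ∀ x, Λt x 0 = 0)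
    (hΛ : ∀ x, ∀ t, 0 ≤ t → HasDerivWithinAt (Λ x)
      (q (Λ x t) * Real.exp (∑ i, x i * β i) * α t) (Ici 0) t)
    (hΛt : ∀ x, ∀ t, 0 ≤ t → HasDerivWithinAt (Λt x)
      (qt (Λt x t) * Real.exp (∑ i, x i * βt i) * αt t) (Ici 0) t) :
    ∀ (x : Fin d → ℝ) (t : ℝ), 0 ≤ t → Λt x t = Λ x t := by
  intro x t ht
  set z := ∑ i, x i * β i with hz
  have hzt : (∑ i, x i * βt i) = c₁ * z := by
    rw [hβ, hz, Finset.mul_sum]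
    exact Finset.sum_congr rfl (fun i _ => by simp [smul_eq_mul]; ring)
  have hid := ode_identity hqc hqpos hαc hαpos hQ hA (exp_pos z) (hΛ0 x) (hΛ x)
  have hidt := ode_identity hqtc hqtpos hαtc hαtpos hQt hAt
      (exp_pos (∑ i, x i * βt i)) (hΛt0 x) (hΛt x)
  have hΛnn : ∀ s, 0 ≤ s → 0 ≤ Λ x s :=
    nonneg_of_ivp (hΛ0 x) (hΛ x) (fun s hs h0 => by
      rw [h0]; exact mul_pos (mul_pos (hqpos 0 le_rfl) (exp_pos _)) (hαpos s hs))
  have hΛtnn : ∀ s, 0 ≤ s → 0 ≤ Λt x s :=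
    nonneg_of_ivp (hΛt0 x) (hΛt x) (fun s hs h0 => by
      rw [h0]; exact mul_pos (mul_pos (hqtpos 0 le_rfl) (exp_pos _)) (hαtpos s hs))
  have hAnn : 0 ≤ A t := by
    rw [hA t]
    exact intervalIntegral.integral_nonneg ht (fun u hu => (hαpos u hu.1).le)
  have key : Qt (Λt x t) = Qt (Λ x t) := by
    rw [hidt t ht, hQc (Λ x t) (hΛnn t ht), hid t ht, hzt, hAc t ht,
      Real.mul_rpow (exp_pos z).le hAnn, mul_comm c₁ z, Real.exp_mul]
    ring
  have hqtinv : ContinuousOn (fun v => (qt v)⁻¹) (Ici 0) :=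
    hqtc.inv₀ (fun v hv => (hqtpos v hv).ne')
  have hQtfun : Qt = fun u => ∫ v in (0:ℝ)..u, (qt v)⁻¹ := funext hQt
  have hQtd : ∀ y, 0 ≤ y → HasDerivWithinAt Qt (qt y)⁻¹ (Ici 0) y := by
    intro y hy; rw [hQtfun]; exact ftc_right hqtinv hy
  have hmono : StrictMonoOn Qt (Ici 0) := by
    apply strictMonoOn_of_deriv_pos (convex_Ici 0)
      (fun y hy => (hQtd y hy).continuousWithinAt)
    intro y hy
    rw [interior_Ici] at hy
    rw [((hQtd y hy.le).hasDerivAt (Ici_mem_nhds hy)).deriv]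
    exact inv_pos.2 (hqtpos y hy.le)
  exact hmono.injOn (hΛtnn t ht) (hΛnn t ht) key
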